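/- arXiv:1108.5635 — 4 statements merged into one kernel-verified Lean document; each statement's English description precedes it below -/
import Mathlib

section
/- Every graph with at least 3 vertices that is connected contains either a special cycle or a special path, where a special cycle is an induced cycle C such that for all x in C, C minus x is not a subgraph of an induced cycle or induced path with more vertices than C, and a special path is an induced path P that is maximal (not contained in a larger induced cycle or longer induced path) and such that for any endpoint x of P, P minus x is not contained in an induced cycle with at least |P| vertices nor in an induced path with more than |P| vertices. -/
namespace CubicBox

/-- `u` and `v` are consecutive elements of the list `l`. -/
def Consec {V : Type*} (l : List V) (u v : V) : Prop :=
  (u, v) ∈ l.zip l.tail ∨ (v, u) ∈ l.zip l.tail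

/-- `u` and `v` are cyclically consecutive elements of the list `l`. -/
def CConsec {V : Type*} (l : List V) (u v : V) : Prop :=
  (u, v) ∈ l.zip (l.rotate 1) ∨ (v, u) ∈ l.zip (l.rotate 1)

/-- The list `l` enumerates (in order) the vertices of an induced path of `G`:
two listed vertices are adjacent iff they are consecutive in the list. -/
def IsInducedPathList {V : Type*} (G : SimpleGraph V) (l : List V) : Prop :=
  l ≠ [] ∧ l.Nodup ∧ ∀ u ∈ l, ∀ v ∈ l, (G.Adj u v ↔ Consec l u v)

/-- The list `l` enumerates (in cyclic order) the vertices of an induced cycle of `G`. -/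
def IsInducedCycleList {V : Type*} (G : SimpleGraph V) (l : List V) : Prop :=
  3 ≤ l.length ∧ l.Nodup ∧ ∀ u ∈ l, ∀ v ∈ l, (G.Adj u v ↔ CConsec l u v)

/-- The vertex set `P` induces a path in `G`. -/
def IsInducedPath {V : Type*} [DecidableEq V] (G : SimpleGraph V) (P : Finset V) : Prop :=
  ∃ l : List V, IsInducedPathList G l ∧ l.toFinset = P

/-- The vertex set `C` induces a cycle in `G`. -/
def IsInducedCycle {V : Type*} [DecidableEq V] (G : SimpleGraph V) (C : Finset V) : Prop :=
  ∃ l : List V, IsInducedCycleList G l ∧ l.toFinset = C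

/-- `x` is an endpoint of the induced path on vertex set `P`. -/
def IsEndpoint {V : Type*} [DecidableEq V] (G : SimpleGraph V) (P : Finset V) (x : V) : Prop :=
  ∃ l : List V, IsInducedPathList G l ∧ l.toFinset = P ∧
    (l.head? = some x ∨ l.getLast? = some x)

/-- A special cycle: an induced cycle `C` such that for every `x ∈ C`, `C \ {x}` is not
contained in an induced cycle or induced path with at least `|C| + 1` vertices. -/
def SpecialCycle {V : Type*} [DecidableEq V] (G : SimpleGraph V) (C : Finset V) : Prop :=
  IsInducedCycle G C ∧
  ∀ x ∈ C, ¬ ∃ D : Finset V, (IsInducedCycle G D ∨ IsInducedPath G D) ∧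
    C.card + 1 ≤ D.card ∧ C.erase x ⊆ D

/-- A special path: a maximal induced path `P` (not contained in an induced cycle nor in a
longer induced path) such that for each endpoint `x`, `P \ {x}` is not contained in an induced
cycle with at least `|P|` vertices nor in an induced path with at least `|P| + 1` vertices. -/
def SpecialPath {V : Type*} [DecidableEq V] (G : SimpleGraph V) (P : Finset V) : Prop :=
  IsInducedPath G P ∧
  (¬ ∃ D : Finset V, (IsInducedCycle G D ∧ P ⊆ D) ∨
      (IsInducedPath G D ∧ P ⊆ D ∧ P.card < D.card)) ∧
  ∀ x, IsEndpoint G P x → ¬ ∃ D : Finset V,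
      (IsInducedCycle G D ∧ P.card ≤ D.card ∧ P.erase x ⊆ D) ∨
      (IsInducedPath G D ∧ P.card + 1 ≤ D.card ∧ P.erase x ⊆ D)

/-- A special cycle of the subgraph of `G` induced on the vertex set `W`. -/
def SpecialCycleIn {V : Type*} [DecidableEq V] (G : SimpleGraph V) (W C : Finset V) : Prop :=
  C ⊆ W ∧ IsInducedCycle G C ∧
  ∀ x ∈ C, ¬ ∃ D : Finset V, D ⊆ W ∧ (IsInducedCycle G D ∨ IsInducedPath G D) ∧
    C.card + 1 ≤ D.card ∧ C.erase x ⊆ D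

/-- A special path of the subgraph of `G` induced on the vertex set `W`. -/
def SpecialPathIn {V : Type*} [DecidableEq V] (G : SimpleGraph V) (W P : Finset V) : Prop :=
  P ⊆ W ∧ IsInducedPath G P ∧
  (¬ ∃ D : Finset V, D ⊆ W ∧ ((IsInducedCycle G D ∧ P ⊆ D) ∨
      (IsInducedPath G D ∧ P ⊆ D ∧ P.card < D.card))) ∧
  ∀ x, IsEndpoint G P x → ¬ ∃ D : Finset V, D ⊆ W ∧
      ((IsInducedCycle G D ∧ P.card ≤ D.card ∧ P.erase x ⊆ D) ∨
       (IsInducedPath G D ∧ P.card + 1 ≤ D.card ∧ P.erase x ⊆ D))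

/-- `ProcessFrom G W Ts A₁`: starting from remaining vertex set `W`, the extraction process of
Algorithm 1 extracts, in order, the special cycles/paths listed in `Ts` (removing each together
with its neighborhood in the current remaining graph), terminating with remaining set `A₁`,
at which point no connected component of the remaining induced subgraph has `≥ 3` vertices. -/
def ProcessFrom {V : Type*} [DecidableEq V] (G : SimpleGraph V) [DecidableRel G.Adj] :
    Finset V → List (Finset V) → Finset V → Prop
  | W, [], A => A = W ∧
      ¬ ∃ x ∈ W, ∃ y ∈ W, ∃ z ∈ W, x ≠ z ∧ G.Adj y x ∧ G.Adj y z
  | W, T :: rest, A =>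
      (SpecialCycleIn G W T ∨ SpecialPathIn G W T) ∧
      ProcessFrom G (W \ (T ∪ W.filter (fun w => ∃ t ∈ T, G.Adj w t))) rest A

/-- The primary partition `V = S ⊎ N₁ ⊎ A₁` obtained by Algorithm 1, with extracted
special cycles/paths listed in `Ts`: `S` is their union, `N₁ = N(S,G)`, and `A₁` is the
final remaining set. -/
def PrimaryPartitionWith {V : Type*} [Fintype V] [DecidableEq V] (G : SimpleGraph V)
    [DecidableRel G.Adj] (Ts : List (Finset V)) (S N₁ A₁ : Finset V) : Prop :=
  ProcessFrom G Finset.univ Ts A₁ ∧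
  S = Ts.foldr (· ∪ ·) ∅ ∧
  N₁ = Finset.univ.filter (fun v => v ∉ S ∧ ∃ s ∈ S, G.Adj v s)

/-- The primary partition `V = S ⊎ N₁ ⊎ A₁` obtained by Algorithm 1. -/
def PrimaryPartition {V : Type*} [Fintype V] [DecidableEq V] (G : SimpleGraph V)
    [DecidableRel G.Adj] (S N₁ A₁ : Finset V) : Prop :=
  ∃ Ts : List (Finset V), PrimaryPartitionWith G Ts S N₁ A₁

/-- One pass of Algorithm 2 (the refinement producing `R` and `B`): starting from the state
`s = (R, B)`, processing the vertices in the given list one at a time (moving `v` to `R`, and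
`X1 v` together with `X2 v` to `B`, whenever `v` has two neighbors in `A₁ \ B`) ends
in the state `t`. -/
def RunsTo {V : Type*} [DecidableEq V] (G : SimpleGraph V) [DecidableRel G.Adj]
    (A₁ : Finset V) (X1 X2 : V → Finset V) :
    Finset V × Finset V → List V → Finset V × Finset V → Prop
  | s, [], t => t = s
  | s, v :: l, t =>
      let X1v := (A₁ \ s.2).filter (fun a => G.Adj v a)
      let X2v := ((A₁ \ s.2).filter (fun a => ∃ x ∈ X1v, G.Adj a x)) \ X1v
      if X1v.card = 2 then
        X1 v = X1v ∧ X2 v = X2v ∧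
        RunsTo G A₁ X1 X2 (insert v s.1, s.2 ∪ X1v ∪ X2v) l t
      else
        RunsTo G A₁ X1 X2 s l t

/-- The refinement of Algorithm 2: iterating over the vertices of `N₁` (in some order) yields
the sets `R` and `B` (with recorded neighborhoods `X1 u`, `X2 u` for `u ∈ R`), and
`N = N₁ \ R`, `A = A₁ \ B`. -/
def Refinement {V : Type*} [DecidableEq V] (G : SimpleGraph V) [DecidableRel G.Adj]
    (N₁ A₁ : Finset V) (X1 X2 : V → Finset V) (R B N A : Finset V) : Prop :=
  ∃ vs : List V, vs.Nodup ∧ vs.toFinset = N₁ ∧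
    RunsTo G A₁ X1 X2 (∅, ∅) vs (R, B) ∧ N = N₁ \ R ∧ A = A₁ \ B

/-- The axis-parallel box in `ℝ^k` that is the product of the closed intervals
`[lo i, hi i]`. -/
def box {k : ℕ} (lo hi : Fin k → ℝ) : Set (Fin k → ℝ) :=
  Set.univ.pi fun i => Set.Icc (lo i) (hi i)

/-- `G` has a `k`-box representation: it is the intersection graph of a family of
(nonempty) axis-parallel boxes in `ℝ^k` indexed by its vertices. -/
def HasBoxRep {W : Type*} (G : SimpleGraph W) (k : ℕ) : Prop :=
  ∃ lo hi : W → Fin k → ℝ, (∀ v i, lo v i ≤ hi v i) ∧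
    ∀ u v : W, G.Adj u v ↔ u ≠ v ∧ (box (lo u) (hi u) ∩ box (lo v) (hi v)).Nonempty

/-- `G` is an interval graph: the intersection graph of a family of closed intervals
on the real line indexed by its vertices. -/
def IsIntervalGraph {W : Type*} (G : SimpleGraph W) : Prop :=
  ∃ lo hi : W → ℝ, (∀ v, lo v ≤ hi v) ∧
    ∀ u v : W, G.Adj u v ↔ u ≠ v ∧
      (Set.Icc (lo u) (hi u) ∩ Set.Icc (lo v) (hi v)).Nonempty

end CubicBox

open CubicBox in
/-- Every connected graph with at least 3 vertices contains a special cycle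
or a special path. -/
theorem stmt_0 {V : Type*} [Fintype V] [DecidableEq V] (G : SimpleGraph V)
    (hconn : G.Connected) (h3 : 3 ≤ Fintype.card V) :
    ∃ T : Finset V, SpecialCycle G T ∨ SpecialPath G T := by
  classical
  have hne : Nonempty V := Fintype.card_pos_iff.mp (by omega)
  obtain ⟨v⟩ := hne
  have hv : IsInducedPath G {v} := by
    refine ⟨[v], ⟨by simp, by simp, ?_⟩, by simp⟩
    intro u hu w hw
    simp only [List.mem_singleton] at hu hw
    subst hu; subst hw
    simp [Consec, G.irrefl]
  set good : Finset (Finset V) :=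
    Finset.univ.filter (fun T => IsInducedCycle G T ∨ IsInducedPath G T) with hgooddef
  have hmemgood : ∀ T : Finset V, T ∈ good ↔ (IsInducedCycle G T ∨ IsInducedPath G T) := by
    intro T; simp [hgooddef]
  have hgood : ({v} : Finset V) ∈ good := (hmemgood _).mpr (Or.inr hv)
  obtain ⟨T, hT, hmax⟩ := good.exists_max_image Finset.card ⟨_, hgood⟩
  have hmax' : ∀ D : Finset V, (IsInducedCycle G D ∨ IsInducedPath G D) → D.card ≤ T.card := by
    intro D hD; exact hmax D ((hmemgood D).mpr hD)
  by_cases hcyc : ∃ C : Finset V, IsInducedCycle G C ∧ T.card ≤ C.card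
  · obtain ⟨C, hC, hCcard⟩ := hcyc
    have hCT : C.card = T.card := le_antisymm (hmax' C (Or.inl hC)) hCcard
    refine ⟨C, Or.inl ⟨hC, ?_⟩⟩
    rintro x hx ⟨D, hD, hDcard, -⟩
    have := hmax' D hD
    omega
  · push_neg at hcyc
    have hTP : IsInducedPath G T := by
      rcases (hmemgood T).mp hT with h | h
      · exact absurd (le_refl T.card) (not_le.mpr (hcyc T h))
      · exact h
    refine ⟨T, Or.inr ⟨hTP, ?_, ?_⟩⟩
    · rintro ⟨D, ⟨hD, hsub⟩ | ⟨hD, hsub, hlt⟩⟩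
      · have h1 : T.card ≤ D.card := Finset.card_le_card hsub
        have h2 : D.card < T.card := hcyc D hD
        omega
      · have := hmax' D (Or.inr hD)
        omega
    · rintro x hx ⟨D, ⟨hD, hDcard, -⟩ | ⟨hD, hDcard, -⟩⟩
      · have := hcyc D hD; omega
      · have := hmax' D (Or.inr hD); omega
end

section
/- If every cubic graph (every vertex has degree exactly 3) has a 3-box representation, then every graph of maximum degree at most 3 has a 3-box representation. -/
/-- `gadget d` is a `d`-regular graph relation on `Fin 4`, for `d ≤ 3`. -/
def gadget (d : ℕ) (i j : Fin 4) : Prop :=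
  if d = 1 then i ≠ j ∧ i.val / 2 = j.val / 2
  else if d = 2 then j = i + 1 ∨ i = j + 1
  else if d = 3 then i ≠ j
  else False

instance (d : ℕ) : DecidableRel (gadget d) := fun i j => by
  unfold gadget; infer_instance

lemma gadget_symm {d : ℕ} {i j : Fin 4} (h : gadget d i j) : gadget d j i := by
  unfold gadget at *; split at h <;> [skip; split at h <;> [skip; split at h]] <;>
    simp_all <;> tauto

lemma gadget_irrefl {d : ℕ} {i : Fin 4} : ¬ gadget d i i := by
  unfold gadget; split <;> [skip; split <;> [skip; split]] <;> simp_all <;> revert i <;> decide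

lemma gadget_card {d : ℕ} (hd : d ≤ 3) (i : Fin 4) :
    (Finset.univ.filter (fun j => gadget d i j)).card = d := by
  interval_cases d <;> revert i <;> decide

/-- The cubic supergraph of `H` on `W × Fin 4`. -/
def bigGraph {W : Type} [Fintype W] [DecidableEq W] (H : SimpleGraph W)
    [DecidableRel H.Adj] : SimpleGraph (W × Fin 4) where
  Adj a b := (a.2 = b.2 ∧ H.Adj a.1 b.1) ∨ (a.1 = b.1 ∧ gadget (3 - H.degree a.1) a.2 b.2)
  symm := by
    constructor
    rintro ⟨u, i⟩ ⟨v, j⟩ (⟨h1, h2⟩ | ⟨h1, h2⟩)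
    · exact Or.inl ⟨h1.symm, h2.symm⟩
    · exact Or.inr ⟨h1.symm, by rw [← h1]; exact gadget_symm h2⟩
  loopless := by
    constructor
    rintro ⟨u, i⟩ (⟨-, h⟩ | ⟨-, h⟩)
    · exact H.irrefl h
    · exact gadget_irrefl h

instance {W : Type} [Fintype W] [DecidableEq W] (H : SimpleGraph W) [DecidableRel H.Adj] :
    DecidableRel (bigGraph H).Adj := fun a b => by unfold bigGraph; simp only; infer_instance

lemma bigGraph_degree {W : Type} [Fintype W] [DecidableEq W] (H : SimpleGraph W)
    [DecidableRel H.Adj] (hdeg : ∀ w, H.degree w ≤ 3) (w : W) (i : Fin 4) :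
    (bigGraph H).degree (w, i) = 3 := by
  classical
  have hnb : (bigGraph H).neighborFinset (w, i) =
      ((H.neighborFinset w).image (fun v => (v, i))) ∪
      ((Finset.univ.filter (fun j => gadget (3 - H.degree w) i j)).image (fun j => (w, j))) := by
    ext ⟨v, j⟩
    rw [SimpleGraph.mem_neighborFinset]
    simp only [SimpleGraph.mem_neighborFinset, Finset.mem_union, Finset.mem_image,
      Finset.mem_filter, Finset.mem_univ, bigGraph, Prod.mk.injEq, true_and]
    constructor
    · rintro (⟨h1, h2⟩ | ⟨h1, h2⟩)
      · exact Or.inl ⟨v, h2, rfl, h1⟩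
      · exact Or.inr ⟨j, h2, h1, rfl⟩
    · rintro (⟨v', hv', rfl, rfl⟩ | ⟨j', hj', rfl, rfl⟩)
      · exact Or.inl ⟨rfl, hv'⟩
      · exact Or.inr ⟨rfl, hj'⟩
  have hdisj : Disjoint ((H.neighborFinset w).image (fun v => (v, i)))
      ((Finset.univ.filter (fun j => gadget (3 - H.degree w) i j)).image (fun j => (w, j))) := by
    rw [Finset.disjoint_left]
    rintro ⟨v, j⟩ h1 h2
    simp only [Finset.mem_image, SimpleGraph.mem_neighborFinset, Finset.mem_filter,
      Finset.mem_univ, Prod.mk.injEq] at h1 h2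
    obtain ⟨v', hv', rfl, rfl⟩ := h1
    obtain ⟨j', hj', rfl, rfl⟩ := h2
    exact H.irrefl hv'
  rw [SimpleGraph.degree, hnb, Finset.card_union_of_disjoint hdisj,
    Finset.card_image_of_injective _ (fun a b h => (Prod.mk.injEq _ _ _ _ ▸ h).1),
    Finset.card_image_of_injective _ (fun a b h => (Prod.mk.injEq _ _ _ _ ▸ h).2),
    gadget_card (by omega) i]
  have := hdeg w
  rw [← SimpleGraph.degree]
  omega


open CubicBox in
/-- if every cubic graph has a 3-box representation, then every graph of
maximum degree at most 3 has a 3-box representation. -/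
theorem stmt_3
    (hcubic : ∀ (V : Type) [Fintype V] [DecidableEq V] (G : SimpleGraph V)
      [DecidableRel G.Adj], (∀ v, G.degree v = 3) → HasBoxRep G 3) :
    ∀ (W : Type) [Fintype W] [DecidableEq W] (H : SimpleGraph W) [DecidableRel H.Adj],
      (∀ w, H.degree w ≤ 3) → HasBoxRep H 3 := by
  intro W _ _ H _ hdeg
  obtain ⟨lo, hi, hle, hadj⟩ := hcubic (W × Fin 4) (bigGraph H) (fun ⟨w, i⟩ => bigGraph_degree H hdeg w i)
  refine ⟨fun w => lo (w, 0), fun w => hi (w, 0), fun v i => hle (v, 0) i, fun u v => ?_⟩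
  have h := hadj (u, 0) (v, 0)
  have hG : (bigGraph H).Adj (u, 0) (v, 0) ↔ H.Adj u v := by
    constructor
    · rintro (⟨-, h2⟩ | ⟨-, h2⟩)
      · exact h2
      · exact absurd h2 gadget_irrefl
    · exact fun h2 => Or.inl ⟨rfl, h2⟩
  rw [hG] at h
  rw [h]
  simp [Prod.ext_iff]
end

section
/- Let G be a graph and suppose T is a special path of G (a maximal induced path such that deleting either endpoint does not yield a subgraph of an induced cycle of size >= |T| or an induced path of size >= |T|+1). Then no vertex v outside T that is adjacent to exactly one endpoint of T and to no interior vertex of T exists, and no vertex v outside T adjacent to both endpoints of T and to no interior vertex exists. Equivalently: every vertex outside T with a neighbor in T has a neighbor among the interior vertices of T. -/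
section Aux
open CubicBox



open CubicBox

lemma mem_zip_tail {V : Type*} {l : List V} {u w : V} :
    (u, w) ∈ l.zip l.tail ↔ ∃ i, ∃ _ : i + 1 < l.length, l[i] = u ∧ l[i+1] = w := by
  rw [List.mem_iff_getElem]
  constructor
  · rintro ⟨i, h, he⟩
    have hlen : i + 1 < l.length := by
      have := h; rw [List.length_zip, List.length_tail] at this; omega
    refine ⟨i, hlen, ?_⟩
    rw [List.getElem_zip, List.getElem_tail] at he
    exact ⟨congrArg Prod.fst he, congrArg Prod.snd he⟩
  · rintro ⟨i, h, h1, h2⟩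
    have hlen : i < (l.zip l.tail).length := by
      rw [List.length_zip, List.length_tail]; omega
    exact ⟨i, hlen, by rw [List.getElem_zip, List.getElem_tail, h1, h2]⟩

lemma consec_iff {V : Type*} {l : List V} {u w : V} :
    Consec l u w ↔ ∃ i, ∃ _ : i + 1 < l.length,
      (l[i] = u ∧ l[i+1] = w) ∨ (l[i] = w ∧ l[i+1] = u) := by
  unfold Consec
  rw [mem_zip_tail, mem_zip_tail]
  constructor
  · rintro (⟨i, h, h1, h2⟩ | ⟨i, h, h1, h2⟩) <;> exact ⟨i, h, by tauto⟩
  · rintro ⟨i, h, ⟨h1, h2⟩ | ⟨h1, h2⟩⟩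
    exacts [Or.inl ⟨i, h, h1, h2⟩, Or.inr ⟨i, h, h1, h2⟩]

lemma consec_mem {V : Type*} {l : List V} {u w : V} (h : Consec l u w) :
    u ∈ l ∧ w ∈ l := by
  rw [consec_iff] at h
  obtain ⟨i, hi, ⟨h1, h2⟩ | ⟨h1, h2⟩⟩ := h
  · exact ⟨List.mem_iff_getElem.mpr ⟨i, by omega, h1⟩,
           List.mem_iff_getElem.mpr ⟨i + 1, by omega, h2⟩⟩
  · exact ⟨List.mem_iff_getElem.mpr ⟨i + 1, by omega, h2⟩,
           List.mem_iff_getElem.mpr ⟨i, by omega, h1⟩⟩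

lemma partner_eq {V : Type*} {l : List V} (hnd : l.Nodup) {x u w : V}
    (hx : l.head? = some x ∨ l.getLast? = some x)
    (hcu : Consec l x u) (hcw : Consec l x w) : u = w := by
  have hne : l ≠ [] := by rintro rfl; rcases hx with hx | hx <;> simp at hx
  have hlen : 0 < l.length := List.length_pos_iff.mpr hne
  rcases hx with hx | hx
  · rw [List.head?_eq_head hne] at hx
    have hx0 : l[0] = x := by
      rw [← List.head_eq_getElem hne]; exact Option.some.inj hx
    have key : ∀ y, Consec l x y → ∃ _ : 1 < l.length, y = l[1] := by
      intro y hc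
      rw [consec_iff] at hc
      obtain ⟨i, hi, ⟨h1, h2⟩ | ⟨h1, h2⟩⟩ := hc
      · have hieq : i = 0 := hnd.getElem_inj_iff.mp (by rw [h1, hx0])
        subst hieq; exact ⟨hi, h2.symm⟩
      · exfalso
        have : i + 1 = 0 := hnd.getElem_inj_iff.mp (by rw [h2, hx0])
        omega
    obtain ⟨_, hu⟩ := key u hcu
    obtain ⟨_, hw⟩ := key w hcw
    rw [hu, hw]
  · rw [List.getLast?_eq_getLast hne] at hx
    have hx0 : l[l.length - 1] = x := by
      rw [← List.getLast_eq_getElem hne]; exact Option.some.inj hx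
    have key : ∀ y, Consec l x y →
        ∃ _ : l.length - 2 < l.length, y = l[l.length - 2] := by
      intro y hc
      rw [consec_iff] at hc
      obtain ⟨i, hi, ⟨h1, h2⟩ | ⟨h1, h2⟩⟩ := hc
      · exfalso
        have : i = l.length - 1 := hnd.getElem_inj_iff.mp (by rw [h1, hx0])
        omega
      · have hieq : i = l.length - 2 := by
          have : i + 1 = l.length - 1 := hnd.getElem_inj_iff.mp (by rw [h2, hx0])
          omega
        subst hieq; exact ⟨by omega, h1.symm⟩
    obtain ⟨_, hu⟩ := key u hcu
    obtain ⟨_, hw⟩ := key w hcw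
    rw [hu, hw]

lemma interior_two {V : Type*} {l : List V} (hnd : l.Nodup) {j : ℕ}
    (h1 : 0 < j) (h2 : j + 1 < l.length) :
    Consec l (l[j]'(by omega)) (l[j-1]'(by omega)) ∧
    Consec l (l[j]'(by omega)) (l[j+1]'h2) ∧
    (l[j-1]'(by omega)) ≠ (l[j+1]'h2) := by
  obtain ⟨k, rfl⟩ : ∃ k, j = k + 1 := ⟨j - 1, by omega⟩
  refine ⟨?_, ?_, ?_⟩
  · rw [consec_iff]
    exact ⟨k, by omega, Or.inr ⟨by simp, by simp⟩⟩
  · rw [consec_iff]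
    exact ⟨k + 1, h2, Or.inl ⟨by simp, by simp⟩⟩
  · intro h
    have h' : l[k]'(by omega) = l[k+1+1]'h2 := by simpa using h
    have : k = k + 1 + 1 := hnd.getElem_inj_iff.mp h'
    omega


lemma endpoint_transfer {V : Type*} [DecidableEq V] {G : SimpleGraph V} {l l' : List V}
    (hl : IsInducedPathList G l) (hl' : IsInducedPathList G l')
    (hT : l.toFinset = l'.toFinset) {x : V}
    (hx : l'.head? = some x ∨ l'.getLast? = some x) :
    l.head? = some x ∨ l.getLast? = some x := by
  obtain ⟨hne, hnd, hadj⟩ := hl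
  obtain ⟨hne', hnd', hadj'⟩ := hl'
  have hxl' : x ∈ l' := by
    rcases hx with hx | hx
    exacts [List.mem_of_mem_head? (Option.mem_def.mpr hx),
            List.mem_of_mem_getLast? (Option.mem_def.mpr hx)]
  have hxl : x ∈ l := by
    rw [← List.mem_toFinset, hT, List.mem_toFinset]; exact hxl'
  obtain ⟨j, hj, rfl⟩ := List.mem_iff_getElem.mp hxl
  by_cases hj0 : j = 0
  · subst hj0
    exact Or.inl (by rw [List.head?_eq_head hne, List.head_eq_getElem])
  by_cases hj1 : j = l.length - 1
  · subst hj1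
    exact Or.inr (by rw [List.getLast?_eq_getLast hne, List.getLast_eq_getElem])
  · exfalso
    have h1 : 0 < j := by omega
    have h2 : j + 1 < l.length := by omega
    obtain ⟨hc1, hc2, hneq⟩ := interior_two hnd h1 h2
    have m0 : l[j] ∈ l := List.mem_iff_getElem.mpr ⟨j, hj, rfl⟩
    have m1 : l[j-1]'(by omega) ∈ l := List.mem_iff_getElem.mpr ⟨j-1, by omega, rfl⟩
    have m2 : l[j+1]'h2 ∈ l := List.mem_iff_getElem.mpr ⟨j+1, h2, rfl⟩
    have a1 : G.Adj (l[j]) (l[j-1]'(by omega)) := (hadj _ m0 _ m1).mpr hc1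
    have a2 : G.Adj (l[j]) (l[j+1]'h2) := (hadj _ m0 _ m2).mpr hc2
    have tmem : ∀ y, y ∈ l → y ∈ l' := fun y hy => by
      rw [← List.mem_toFinset, ← hT, List.mem_toFinset]; exact hy
    have c1' : Consec l' (l[j]) (l[j-1]'(by omega)) := (hadj' _ (tmem _ m0) _ (tmem _ m1)).mp a1
    have c2' : Consec l' (l[j]) (l[j+1]'h2) := (hadj' _ (tmem _ m0) _ (tmem _ m2)).mp a2
    exact hneq (partner_eq hnd' hx c1' c2')

lemma getElem_idx_congr {V : Type*} (l : List V) {i j : ℕ} (h : i = j) (hi : i < l.length) :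
    l[i] = l[j]'(h ▸ hi) := by subst h; rfl

lemma mem_zip_tail_cons {V : Type*} {l : List V} (hne : l ≠ []) (v u w : V) :
    (u, w) ∈ (v :: l).zip (v :: l).tail ↔
      (u = v ∧ w = l.head hne) ∨ (u, w) ∈ l.zip l.tail := by
  have hlen : 0 < l.length := List.length_pos_iff.mpr hne
  rw [mem_zip_tail, mem_zip_tail]
  constructor
  · rintro ⟨i, hi, h1, h2⟩
    match i, hi, h1, h2 with
    | 0, hi, h1, h2 =>
      left
      exact ⟨by simpa using h1.symm, by rw [List.head_eq_getElem]; simpa using h2.symm⟩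
    | (k+1), hi, h1, h2 =>
      right
      exact ⟨k, by simpa using hi, by simpa using h1, by simpa using h2⟩
  · rintro (⟨rfl, rfl⟩ | ⟨i, hi, h1, h2⟩)
    · exact ⟨0, by simpa using hlen, by simp, by simp [List.head_eq_getElem]⟩
    · exact ⟨i + 1, by simpa using hi, by simpa using h1, by simpa using h2⟩

lemma mem_zip_tail_append {V : Type*} {l : List V} (hne : l ≠ []) (v u w : V) :
    (u, w) ∈ (l ++ [v]).zip (l ++ [v]).tail ↔
      (u = l.getLast hne ∧ w = v) ∨ (u, w) ∈ l.zip l.tail := by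
  have hlen : 0 < l.length := List.length_pos_iff.mpr hne
  rw [mem_zip_tail, mem_zip_tail]
  constructor
  · rintro ⟨i, hi, h1, h2⟩
    have hi' : i + 1 < l.length + 1 := by simpa using hi
    by_cases hc : i + 1 < l.length
    · right
      refine ⟨i, hc, ?_, ?_⟩
      · rw [← h1]; exact (List.getElem_append_left (by omega)).symm
      · rw [← h2]; exact (List.getElem_append_left hc).symm
    · left
      have hieq : i + 1 = l.length := by omega
      constructor
      · rw [List.getLast_eq_getElem, ← h1, List.getElem_append_left (by omega)]
        exact (getElem_idx_congr l (by omega) (by omega)).symm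
      · rw [← h2, getElem_idx_congr _ hieq, List.getElem_append_right (le_refl _)]
        simp
  · rintro (⟨rfl, rfl⟩ | ⟨i, hi, h1, h2⟩)
    · refine ⟨l.length - 1, by simp; omega, ?_, ?_⟩
      · rw [List.getLast_eq_getElem]; exact List.getElem_append_left (by omega)
      · rw [getElem_idx_congr _ (by omega : l.length - 1 + 1 = l.length),
            List.getElem_append_right (le_refl _)]
        simp
    · refine ⟨i, by simp; omega, ?_, ?_⟩
      · rw [List.getElem_append_left (by omega)]; exact h1
      · rw [List.getElem_append_left hi]; exact h2

lemma mem_zip_rot {V : Type*} {l : List V} (hne : l ≠ []) (v u w : V) :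
    (u, w) ∈ (v :: l).zip ((v :: l).rotate 1) ↔
      (u = v ∧ w = l.head hne) ∨ (u = l.getLast hne ∧ w = v) ∨ (u, w) ∈ l.zip l.tail := by
  have hlen : 0 < l.length := List.length_pos_iff.mpr hne
  have hrot : (v :: l).rotate 1 = l ++ [v] := by simp [List.rotate_cons_succ]
  rw [hrot, List.mem_iff_getElem]
  constructor
  · rintro ⟨i, hi, he⟩
    have hi' : i < l.length + 1 := by
      rw [List.length_zip] at hi; simp at hi; omega
    rw [List.getElem_zip, Prod.mk.injEq] at he
    obtain ⟨hu, hw⟩ := he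
    match i, hi, hi', hu, hw with
    | 0, hi, hi', hu, hw =>
      left
      refine ⟨by simpa using hu.symm, ?_⟩
      rw [List.head_eq_getElem, ← hw, List.getElem_append_left hlen]
    | (k+1), hi, hi', hu, hw =>
      by_cases hk : k + 1 < l.length
      · right; right
        rw [mem_zip_tail]
        refine ⟨k, hk, by simpa using hu, ?_⟩
        rw [← hw, List.getElem_append_left hk]
      · right; left
        have hke : k + 1 = l.length := by omega
        constructor
        · rw [List.getLast_eq_getElem, ← hu]
          simp only [List.getElem_cons_succ]
          exact (getElem_idx_congr l (by omega) (by omega)).symm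
        · rw [← hw, getElem_idx_congr _ hke, List.getElem_append_right (le_refl _)]
          simp
  · rintro (⟨rfl, rfl⟩ | ⟨rfl, rfl⟩ | hm)
    · refine ⟨0, by rw [List.length_zip]; simp, ?_⟩
      rw [List.getElem_zip, Prod.mk.injEq]
      refine ⟨by simp, ?_⟩
      rw [List.getElem_append_left hlen, List.head_eq_getElem]
    · refine ⟨l.length, by rw [List.length_zip]; simp, ?_⟩
      rw [List.getElem_zip, Prod.mk.injEq]
      constructor
      · obtain ⟨m, hm⟩ : ∃ m, l.length = m + 1 := ⟨l.length - 1, by omega⟩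
        rw [getElem_idx_congr _ hm]
        simp only [List.getElem_cons_succ]
        rw [List.getLast_eq_getElem]
        exact (getElem_idx_congr l (by omega) (by omega)).symm
      · rw [List.getElem_append_right (le_refl _)]
        simp
    · rw [mem_zip_tail] at hm
      obtain ⟨i, hi, h1, h2⟩ := hm
      refine ⟨i + 1, by rw [List.length_zip]; simp; omega, ?_⟩
      rw [List.getElem_zip, Prod.mk.injEq]
      refine ⟨by simpa using h1, ?_⟩
      rw [List.getElem_append_left hi]; exact h2


lemma consec_cons {V : Type*} {l : List V} (hne : l ≠ []) (v u w : V) :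
    Consec (v :: l) u w ↔
      (u = v ∧ w = l.head hne) ∨ (w = v ∧ u = l.head hne) ∨ Consec l u w := by
  unfold Consec
  rw [mem_zip_tail_cons hne, mem_zip_tail_cons hne]
  tauto

lemma consec_append {V : Type*} {l : List V} (hne : l ≠ []) (v u w : V) :
    Consec (l ++ [v]) u w ↔
      (u = l.getLast hne ∧ w = v) ∨ (w = l.getLast hne ∧ u = v) ∨ Consec l u w := by
  unfold Consec
  rw [mem_zip_tail_append hne, mem_zip_tail_append hne]
  tauto

lemma cconsec_cons {V : Type*} {l : List V} (hne : l ≠ []) (v u w : V) :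
    CConsec (v :: l) u w ↔
      (u = v ∧ w = l.head hne) ∨ (w = v ∧ u = l.head hne) ∨
      (u = l.getLast hne ∧ w = v) ∨ (w = l.getLast hne ∧ u = v) ∨ Consec l u w := by
  unfold CConsec Consec
  rw [mem_zip_rot hne, mem_zip_rot hne]
  tauto

end Aux

open CubicBox in
/-- every vertex outside a special path `T` having a neighbor in `T` has a
neighbor among the interior vertices of `T`. -/
theorem stmt_10 {V : Type*} [DecidableEq V] (G : SimpleGraph V) (T : Finset V)
    (hT : SpecialPath G T) (h3 : 3 ≤ T.card) (v : V) (hv : v ∉ T)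
    (hadj : ∃ t ∈ T, G.Adj v t) :
    ∃ t ∈ T, ¬ IsEndpoint G T t ∧ G.Adj v t := by
  obtain ⟨hTpath, hTmax, _hTend⟩ := hT
  obtain ⟨l, hl, hlT⟩ := hTpath
  obtain ⟨hne, hnd, hadjl⟩ := hl
  have hcard : T.card = l.length := by
    rw [← hlT]; exact List.toFinset_card_of_nodup hnd
  have hlen3 : 3 ≤ l.length := by omega
  have hal : l.head hne ∈ l := List.head_mem hne
  have hbl : l.getLast hne ∈ l := List.getLast_mem hne
  have hvl : v ∉ l := fun h => hv (by rw [← hlT]; exact List.mem_toFinset.mpr h)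
  have hvna : v ≠ l.head hne := fun h => hvl (h ▸ hal)
  have hvnb : v ≠ l.getLast hne := fun h => hvl (h ▸ hbl)
  by_contra hcon
  push_neg at hcon
  have hend : ∀ t ∈ l, G.Adj v t → t = l.head hne ∨ t = l.getLast hne := by
    intro t ht hvt
    have htT : t ∈ T := by rw [← hlT]; exact List.mem_toFinset.mpr ht
    have hE : IsEndpoint G T t := by
      by_contra hE
      exact hcon t htT hE hvt
    obtain ⟨l', hl', hl'T, hx⟩ := hE
    have := endpoint_transfer ⟨hne, hnd, hadjl⟩ hl' (hlT.trans hl'T.symm) hx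
    rcases this with h | h
    · left; rw [List.head?_eq_head hne] at h; exact (Option.some.inj h).symm
    · right; rw [List.getLast?_eq_getLast hne] at h; exact (Option.some.inj h).symm
  by_cases hva : G.Adj v (l.head hne) <;> by_cases hvb : G.Adj v (l.getLast hne)
  · -- adjacent to both endpoints: extend to an induced cycle
    refine hTmax ⟨(v :: l).toFinset, Or.inl ⟨⟨v :: l, ⟨?_, ?_, ?_⟩, rfl⟩, ?_⟩⟩
    · simp only [List.length_cons]; omega
    · exact List.nodup_cons.mpr ⟨hvl, hnd⟩
    · intro u hu w hw
      rw [cconsec_cons hne]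
      rcases List.mem_cons.mp hu with hu' | hu'
      · obtain rfl := hu'.symm
        rcases List.mem_cons.mp hw with hw' | hw'
        · obtain rfl := hw'.symm
          constructor
          · intro h; exact absurd h (G.irrefl)
          · rintro (⟨_, h⟩ | ⟨_, h⟩ | ⟨h, _⟩ | ⟨h, _⟩ | hc)
            exacts [absurd h hvna, absurd h hvna, absurd h hvnb, absurd h hvnb,
              absurd (consec_mem hc).1 hvl]
        · constructor
          · intro h
            rcases hend w hw' h with rfl | rfl
            · exact Or.inl ⟨rfl, rfl⟩
            · exact Or.inr (Or.inr (Or.inr (Or.inl ⟨rfl, rfl⟩)))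
          · rintro (⟨_, h⟩ | ⟨h, _⟩ | ⟨h, _⟩ | ⟨h, _⟩ | hc)
            · rw [h]; exact hva
            · exact absurd (h ▸ hw') hvl
            · exact absurd h hvnb
            · rw [h]; exact hvb
            · exact absurd (consec_mem hc).1 hvl
      · rcases List.mem_cons.mp hw with hw' | hw'
        · obtain rfl := hw'.symm
          constructor
          · intro h
            rcases hend u hu' h.symm with rfl | rfl
            · exact Or.inr (Or.inl ⟨rfl, rfl⟩)
            · exact Or.inr (Or.inr (Or.inl ⟨rfl, rfl⟩))
          · rintro (⟨h, _⟩ | ⟨_, h⟩ | ⟨h, _⟩ | ⟨h, _⟩ | hc)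
            · exact absurd (h ▸ hu') hvl
            · rw [h]; exact hva.symm
            · rw [h]; exact hvb.symm
            · exact absurd h hvnb
            · exact absurd (consec_mem hc).2 hvl
        · constructor
          · intro h
            exact Or.inr (Or.inr (Or.inr (Or.inr ((hadjl u hu' w hw').mp h))))
          · rintro (⟨h, _⟩ | ⟨h, _⟩ | ⟨_, h⟩ | ⟨_, h⟩ | hc)
            · exact absurd (h ▸ hu') hvl
            · exact absurd (h ▸ hw') hvl
            · exact absurd (h ▸ hw') hvl
            · exact absurd (h ▸ hu') hvl
            · exact (hadjl u hu' w hw').mpr hc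
    · rw [List.toFinset_cons, hlT]; exact Finset.subset_insert _ _
  · -- adjacent only to the head: prepend v
    refine hTmax ⟨(v :: l).toFinset, Or.inr ⟨⟨v :: l, ⟨List.cons_ne_nil _ _, ?_, ?_⟩, rfl⟩,
      ?_, ?_⟩⟩
    · exact List.nodup_cons.mpr ⟨hvl, hnd⟩
    · intro u hu w hw
      rw [consec_cons hne]
      rcases List.mem_cons.mp hu with hu' | hu'
      · obtain rfl := hu'.symm
        rcases List.mem_cons.mp hw with hw' | hw'
        · obtain rfl := hw'.symm
          constructor
          · intro h; exact absurd h (G.irrefl)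
          · rintro (⟨_, h⟩ | ⟨_, h⟩ | hc)
            exacts [absurd h hvna, absurd h hvna, absurd (consec_mem hc).1 hvl]
        · constructor
          · intro h
            rcases hend w hw' h with rfl | rfl
            · exact Or.inl ⟨rfl, rfl⟩
            · exact absurd h hvb
          · rintro (⟨_, h⟩ | ⟨h, _⟩ | hc)
            · rw [h]; exact hva
            · exact absurd (h ▸ hw') hvl
            · exact absurd (consec_mem hc).1 hvl
      · rcases List.mem_cons.mp hw with hw' | hw'
        · obtain rfl := hw'.symm
          constructor
          · intro h
            rcases hend u hu' h.symm with rfl | rfl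
            · exact Or.inr (Or.inl ⟨rfl, rfl⟩)
            · exact absurd h.symm hvb
          · rintro (⟨h, _⟩ | ⟨_, h⟩ | hc)
            · exact absurd (h ▸ hu') hvl
            · rw [h]; exact hva.symm
            · exact absurd (consec_mem hc).2 hvl
        · constructor
          · intro h
            exact Or.inr (Or.inr ((hadjl u hu' w hw').mp h))
          · rintro (⟨h, _⟩ | ⟨h, _⟩ | hc)
            · exact absurd (h ▸ hu') hvl
            · exact absurd (h ▸ hw') hvl
            · exact (hadjl u hu' w hw').mpr hc
    · rw [List.toFinset_cons, hlT]; exact Finset.subset_insert _ _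
    · rw [List.toFinset_cons, hlT, Finset.card_insert_of_notMem hv]; omega
  · -- adjacent only to the last: append v
    have hnd' : (l ++ [v]).Nodup := by
      rw [List.nodup_append]
      exact ⟨hnd, List.nodup_singleton _, fun a ha b hb h => hvl (by rw [List.mem_singleton] at hb; rw [← hb, ← h]; exact ha)⟩
    refine hTmax ⟨(l ++ [v]).toFinset, Or.inr ⟨⟨l ++ [v], ⟨by simp, hnd', ?_⟩, rfl⟩,
      ?_, ?_⟩⟩
    · intro u hu w hw
      rw [consec_append hne]
      rw [List.mem_append, List.mem_singleton] at hu hw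
      rcases hu with hu' | hu'
      · rcases hw with hw' | hw'
        · constructor
          · intro h
            exact Or.inr (Or.inr ((hadjl u hu' w hw').mp h))
          · rintro (⟨_, h⟩ | ⟨_, h⟩ | hc)
            · exact absurd (h ▸ hw') hvl
            · exact absurd (h ▸ hu') hvl
            · exact (hadjl u hu' w hw').mpr hc
        · obtain rfl := hw'.symm
          constructor
          · intro h
            rcases hend u hu' h.symm with rfl | rfl
            · exact absurd h.symm hva
            · exact Or.inl ⟨rfl, rfl⟩
          · rintro (⟨h, _⟩ | ⟨h, _⟩ | hc)
            · rw [h]; exact hvb.symm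
            · exact absurd h hvnb
            · exact absurd (consec_mem hc).2 hvl
      · obtain rfl := hu'.symm
        rcases hw with hw' | hw'
        · constructor
          · intro h
            rcases hend w hw' h with rfl | rfl
            · exact absurd h hva
            · exact Or.inr (Or.inl ⟨rfl, rfl⟩)
          · rintro (⟨h, _⟩ | ⟨h, _⟩ | hc)
            · exact absurd h hvnb
            · rw [h]; exact hvb
            · exact absurd (consec_mem hc).1 hvl
        · obtain rfl := hw'.symm
          constructor
          · intro h; exact absurd h (G.irrefl)
          · rintro (⟨h, _⟩ | ⟨h, _⟩ | hc)
            exacts [absurd h hvnb, absurd h hvnb, absurd (consec_mem hc).1 hvl]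
    · rw [List.toFinset_append, hlT]; exact Finset.subset_union_left
    · rw [List.toFinset_card_of_nodup hnd']
      simp only [List.length_append, List.length_singleton]
      omega
  · -- adjacent to no endpoint: contradiction with hadj
    obtain ⟨t, htT, hvt⟩ := hadj
    have htl : t ∈ l := by rw [← hlT] at htT; exact List.mem_toFinset.mp htT
    rcases hend t htl hvt with rfl | rfl
    · exact hva hvt
    · exact hvb hvt
end

section
/- Let G be a cubic graph with the partition V = S ⊎ N_1 ⊎ A_1 from the extraction process, and run the refinement: iterate over v in N_1; whenever v has two neighbors X_1(v) in A_1 \ B, move v to R and move X_1(v) together with the A_1\B-neighbors X_2(v) of X_1(v) into B. Then for distinct u, v in R, the sets Γ(u) = {u} ∪ X_1(u) ∪ X_2(u) and Γ(v) are disjoint, and R ∪ B is the disjoint union of the Γ(u) over u in R. -/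
namespace CubicBox

lemma processFrom_avoid {V : Type} [DecidableEq V] (G : SimpleGraph V) [DecidableRel G.Adj] :
    ∀ (Ts : List (Finset V)) (W A : Finset V), ProcessFrom G W Ts A →
      A ⊆ W ∧ ∀ a ∈ A, ∀ T ∈ Ts, a ∉ T ∧ ∀ t ∈ T, ¬ G.Adj a t := by
  intro Ts
  induction Ts with
  | nil =>
      intro W A h
      obtain ⟨rfl, -⟩ := h
      exact ⟨le_refl _, by simp⟩
  | cons T rest ih =>
      intro W A h
      obtain ⟨-, h2⟩ := h
      obtain ⟨hsub, hprop⟩ := ih _ _ h2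
      constructor
      · exact hsub.trans (Finset.sdiff_subset)
      · intro a ha T' hT'
        have haW' := hsub ha
        rw [Finset.mem_sdiff, Finset.mem_union] at haW'
        rcases List.mem_cons.1 hT' with rfl | hT'
        · refine ⟨fun hc => haW'.2 (Or.inl hc), fun t ht hadj => ?_⟩
          exact haW'.2 (Or.inr (Finset.mem_filter.2 ⟨haW'.1, ⟨t, ht, hadj⟩⟩))
        · exact hprop a ha T' hT'

lemma mem_foldr_union {V : Type} [DecidableEq V] :
    ∀ (Ts : List (Finset V)) (s : V), s ∈ Ts.foldr (· ∪ ·) ∅ → ∃ T ∈ Ts, s ∈ T := by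
  intro Ts
  induction Ts with
  | nil => simp
  | cons T rest ih =>
      intro s hs
      simp only [List.foldr_cons, Finset.mem_union] at hs
      rcases hs with h | h
      · exact ⟨T, by simp, h⟩
      · obtain ⟨T', hT', hsT'⟩ := ih s h
        exact ⟨T', by simp [hT'], hsT'⟩

lemma primary_disjoint {V : Type} [Fintype V] [DecidableEq V] (G : SimpleGraph V)
    [DecidableRel G.Adj] {S N₁ A₁ : Finset V} (h : PrimaryPartition G S N₁ A₁) :
    ∀ a ∈ A₁, a ∉ N₁ := by
  obtain ⟨Ts, hproc, rfl, rfl⟩ := h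
  intro a ha hmem
  rw [Finset.mem_filter] at hmem
  obtain ⟨-, -, s, hs, hadj⟩ := hmem
  obtain ⟨T, hT, hsT⟩ := mem_foldr_union Ts s hs
  exact ((processFrom_avoid G Ts _ _ hproc).2 a ha T hT).2 s hsT hadj

lemma runsTo_inv {V : Type} [DecidableEq V] (G : SimpleGraph V) [DecidableRel G.Adj]
    (A₁ : Finset V) (X1 X2 : V → Finset V) :
    ∀ (l : List V) (R₀ B₀ R B : Finset V),
      l.Nodup → (∀ x ∈ l, x ∉ R₀) → (∀ x ∈ l, x ∉ A₁) →
      RunsTo G A₁ X1 X2 (R₀, B₀) l (R, B) →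
      R₀ ⊆ R ∧ B₀ ⊆ B ∧
      (∀ u ∈ R, u ∉ R₀ → u ∈ l) ∧
      (∀ u ∈ R, u ∉ R₀ → X1 u ∪ X2 u ⊆ (A₁ \ B₀) ∩ B) ∧
      (∀ u ∈ R, u ∉ R₀ → ∀ v ∈ R, v ∉ R₀ → u ≠ v →
        Disjoint (insert u (X1 u ∪ X2 u)) (insert v (X1 v ∪ X2 v))) ∧
      R ∪ B = (R₀ ∪ B₀) ∪ (R \ R₀).biUnion (fun u => insert u (X1 u ∪ X2 u)) := by
  intro l
  induction l with
  | nil =>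
      intro R₀ B₀ R B _ _ _ h
      have heq : (R, B) = (R₀, B₀) := h
      obtain ⟨h1, h2⟩ := Prod.mk.inj heq
      subst h1; subst h2
      exact ⟨le_refl _, le_refl _, fun u hu hnu => absurd hu hnu,
        fun u hu hnu => absurd hu hnu,
        fun u hu hnu => absurd hu hnu, by simp⟩
  | cons v l ih =>
      intro R₀ B₀ R B hnd hR₀ hA₁ h
      simp only [RunsTo] at h
      rw [List.nodup_cons] at hnd
      obtain ⟨hvl, hndl⟩ := hnd
      have hvA : v ∉ A₁ := hA₁ v (List.mem_cons_self (a := v) (l := l))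
      have hvR₀ : v ∉ R₀ := hR₀ v (List.mem_cons_self (a := v) (l := l))
      by_cases hc : (Finset.filter (fun a => G.Adj v a) (A₁ \ B₀)).card = 2
      · rw [if_pos hc] at h
        obtain ⟨hX1, hX2, h⟩ := h
        set Y1 := Finset.filter (fun a => G.Adj v a) (A₁ \ B₀) with hY1
        set Y2 := Finset.filter (fun a => ∃ x ∈ Y1, G.Adj a x) (A₁ \ B₀) \ Y1 with hY2
        have hYsub : Y1 ∪ Y2 ⊆ A₁ \ B₀ := by
          apply Finset.union_subset (Finset.filter_subset _ _)
          exact (Finset.sdiff_subset).trans (Finset.filter_subset _ _)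
        obtain ⟨h1, h2, h3, h4, h5, h6⟩ := ih (insert v R₀) (B₀ ∪ Y1 ∪ Y2) R B hndl
          (fun x hx hmem => by
            rcases Finset.mem_insert.1 hmem with rfl | hmem
            · exact hvl hx
            · exact hR₀ x (List.mem_cons_of_mem v hx) hmem)
          (fun x hx => hA₁ x (List.mem_cons_of_mem v hx)) h
        have hvR : v ∈ R := h1 (Finset.mem_insert_self v R₀)
        have hXvB : X1 v ∪ X2 v ⊆ (A₁ \ B₀) ∩ B := by
          rw [hX1, hX2]
          intro x hx
          refine Finset.mem_inter.2 ⟨hYsub hx, h2 ?_⟩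
          rcases Finset.mem_union.1 hx with hx | hx
          · exact Finset.mem_union.2 (Or.inl (Finset.mem_union.2 (Or.inr hx)))
          · exact Finset.mem_union.2 (Or.inr hx)
        have key : ∀ u ∈ R, u ∉ R₀ → u ≠ v → u ∈ R ∧ u ∉ insert v R₀ := by
          intro u hu hn hne
          exact ⟨hu, fun hmem => (Finset.mem_insert.1 hmem).elim hne hn⟩
        refine ⟨(Finset.subset_insert v R₀).trans h1,
          (fun x hx => h2 (Finset.mem_union.2 (Or.inl (Finset.mem_union.2 (Or.inl hx))))),
          ?_, ?_, ?_, ?_⟩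
        · intro u hu hn
          by_cases hne : u = v
          · exact hne ▸ List.mem_cons_self (a := v) (l := l)
          · exact List.mem_cons_of_mem v (h3 u hu (key u hu hn hne).2)
        · intro u hu hn
          by_cases hne : u = v
          · exact hne ▸ hXvB
          · refine (h4 u hu (key u hu hn hne).2).trans ?_
            intro x hx
            rw [Finset.mem_inter, Finset.mem_sdiff] at hx ⊢
            exact ⟨⟨hx.1.1, fun hb => hx.1.2
              (Finset.mem_union.2 (Or.inl (Finset.mem_union.2 (Or.inl hb))))⟩, hx.2⟩
        · -- pairwise disjointness
          have hdisj : ∀ u ∈ R, u ∉ insert v R₀ →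
              Disjoint (insert v (X1 v ∪ X2 v)) (insert u (X1 u ∪ X2 u)) := by
            intro u hu hn
            have huA : u ∉ A₁ := hA₁ u (List.mem_cons_of_mem v (h3 u hu hn))
            have huX : X1 u ∪ X2 u ⊆ (A₁ \ (B₀ ∪ Y1 ∪ Y2)) ∩ B := h4 u hu hn
            have hune : u ≠ v := fun e => (e ▸ hn) (Finset.mem_insert_self v R₀)
            rw [Finset.disjoint_left]
            intro x hx hx'
            rcases Finset.mem_insert.1 hx with rfl | hx
            · rcases Finset.mem_insert.1 hx' with rfl | hx'
              · exact hune rfl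
              · exact hvA (Finset.mem_sdiff.1 (Finset.mem_inter.1 (huX hx')).1).1
            · have hmem : x ∈ Y1 ∪ Y2 := by rw [hX1, hX2] at hx; exact hx
              rcases Finset.mem_insert.1 hx' with rfl | hx'
              · exact huA (Finset.mem_sdiff.1 (hYsub hmem)).1
              · have hb := (Finset.mem_sdiff.1 (Finset.mem_inter.1 (huX hx')).1).2
                rcases Finset.mem_union.1 hmem with h' | h'
                · exact hb (Finset.mem_union.2 (Or.inl (Finset.mem_union.2 (Or.inr h'))))
                · exact hb (Finset.mem_union.2 (Or.inr h'))
          intro u hu hnu w hw hnw hne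
          by_cases huv : u = v
          · by_cases hwv : w = v
            · exact absurd (huv.trans hwv.symm) hne
            · rw [huv]; exact hdisj w hw (key w hw hnw hwv).2
          · by_cases hwv : w = v
            · rw [hwv]; exact (hdisj u hu (key u hu hnu huv).2).symm
            · exact h5 u hu (key u hu hnu huv).2 w hw (key w hw hnw hwv).2 hne
        · have hsplit : R \ R₀ = insert v (R \ insert v R₀) := by
            ext x
            simp only [Finset.mem_sdiff, Finset.mem_insert, not_or]
            constructor
            · rintro ⟨hxR, hxn⟩
              by_cases hxv : x = v
              · exact Or.inl hxv
              · exact Or.inr ⟨hxR, hxv, hxn⟩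
            · rintro (rfl | ⟨hxR, -, hxn⟩)
              · exact ⟨hvR, hvR₀⟩
              · exact ⟨hxR, hxn⟩
          rw [hsplit, Finset.biUnion_insert, hX1, hX2, h6]
          ext x
          simp only [Finset.mem_union, Finset.mem_insert]
          tauto
      · rw [if_neg hc] at h
        obtain ⟨h1, h2, h3, h4, h5, h6⟩ := ih R₀ B₀ R B hndl
          (fun x hx => hR₀ x (List.mem_cons_of_mem v hx))
          (fun x hx => hA₁ x (List.mem_cons_of_mem v hx)) h
        exact ⟨h1, h2, fun u hu hn => List.mem_cons_of_mem v (h3 u hu hn), h4, h5, h6⟩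

end CubicBox

open CubicBox in
/-- for distinct `u, v ∈ R` the sets `Γ(u) = {u} ∪ X1(u) ∪ X2(u)` are disjoint,
and `R ∪ B` is the disjoint union of the `Γ(u)`, `u ∈ R`. -/
theorem stmt_15 {V : Type} [Fintype V] [DecidableEq V] (G : SimpleGraph V)
    [DecidableRel G.Adj] (hcubic : ∀ v, G.degree v = 3)
    (S N₁ A₁ R B N A : Finset V) (X1 X2 : V → Finset V)
    (hprim : PrimaryPartition G S N₁ A₁)
    (href : Refinement G N₁ A₁ X1 X2 R B N A) :
    (∀ u ∈ R, ∀ v ∈ R, u ≠ v →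
        Disjoint (insert u (X1 u ∪ X2 u)) (insert v (X1 v ∪ X2 v))) ∧
    R ∪ B = R.biUnion (fun u => insert u (X1 u ∪ X2 u)) := by
  obtain ⟨vs, hnd, hvs, hrun, -, -⟩ := href
  have hdisjA : ∀ x ∈ vs, x ∉ A₁ := fun x hx hxA =>
    primary_disjoint G hprim x hxA (hvs ▸ List.mem_toFinset.2 hx)
  obtain ⟨-, -, -, -, h5, h6⟩ := runsTo_inv G A₁ X1 X2 vs ∅ ∅ R B hnd
    (fun x _ hx => Finset.notMem_empty x hx) hdisjA hrun
  refine ⟨fun u hu v hv hne =>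
    h5 u hu (Finset.notMem_empty u) v hv (Finset.notMem_empty v) hne, ?_⟩
  simpa using h6
end
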